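/- For every λ > 0, q > 0 and N ≥ 1, the integer-lattice translates of the multivariate kernel form an exact partition of unity: for every x ∈ ℝ^N, the series ∑_{k ∈ ℤ^N} Z(x − k) converges and equals 1. -/

import Mathlib

/-- Deformed activation function `g_{q,λ}(x) = (e^{λx} − q e^{−λx})/(e^{λx} + q e^{−λx})`. -/
noncomputable def gq (q lam x : ℝ) : ℝ :=
  (Real.exp (lam * x) - q * Real.exp (-(lam * x))) /
    (Real.exp (lam * x) + q * Real.exp (-(lam * x)))

/-- Localized kernel `M_{q,λ}(x) = (1/4)(g_{q,λ}(x+1) − g_{q,λ}(x−1))`. -/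
noncomputable def Mq (q lam x : ℝ) : ℝ :=
  (gq q lam (x + 1) - gq q lam (x - 1)) / 4

/-- Symmetrized kernel `Φ(x) = (1/2)(M_{q,λ}(x) + M_{1/q,λ}(x))`. -/
noncomputable def Phi (q lam x : ℝ) : ℝ :=
  (Mq q lam x + Mq q⁻¹ lam x) / 2

/-- Multivariate kernel `Z(x) = ∏_{i=1}^N Φ(x_i)`. -/
noncomputable def Zker (q lam : ℝ) {N : ℕ} (x : Fin N → ℝ) : ℝ :=
  ∏ i, Phi q lam (x i)

/-!
`g_{q,λ}` increases from `-1` to `1`, so the differences `g(x - k + 1) - g(x - k)`, `k ∈ ℤ`, are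
nonnegative and telescope to `2`. Since `4 M_{q,λ}(x) = (g(x+1) - g(x)) + (g(x) - g(x-1))`, the integer
translates of `M_{q,λ}`, and hence of `Φ`, sum to `1`. Nonnegativity makes all these series absolutely
convergent, so the `N`-fold product of the one-dimensional sums is the sum of `Z` over `ℤ^N`.
-/

open Filter Topology

theorem Antitone.hasSum_sub_succ {u : ℕ → ℝ} (hu : Antitone u) {a : ℝ}
    (h : Tendsto u atTop (𝓝 a)) : HasSum (fun n => u n - u (n + 1)) (u 0 - a) := by
  rw [hasSum_iff_tendsto_nat_of_nonneg fun n => sub_nonneg.2 (hu n.le_succ)]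
  simp_rw [Finset.sum_range_sub']
  exact tendsto_const_nhds.sub h

theorem Antitone.hasSum_int_sub_succ {u : ℤ → ℝ} (hu : Antitone u) {a b : ℝ}
    (htop : Tendsto u atTop (𝓝 a)) (hbot : Tendsto u atBot (𝓝 b)) :
    HasSum (fun k => u k - u (k + 1)) (b - a) := by
  have hnat : HasSum (fun n : ℕ => u n - u (n + 1)) (u 0 - a) := by
    simpa using (hu.comp_monotone Nat.mono_cast).hasSum_sub_succ
      (htop.comp tendsto_natCast_atTop_atTop)
  have hneg : HasSum (fun n : ℕ => u (-(n + 1 : ℤ)) - u (-(n + 1 : ℤ) + 1)) (b - u 0) := by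
    have hv : Antitone fun n : ℕ => -u (-n) := fun m n hmn =>
      neg_le_neg (hu (neg_le_neg (Nat.cast_le.2 hmn)))
    have hlim : Tendsto (fun n : ℕ => -u (-n)) atTop (𝓝 (-b)) :=
      (hbot.comp (tendsto_neg_atTop_atBot.comp tendsto_natCast_atTop_atTop)).neg
    convert hv.hasSum_sub_succ hlim using 1
    · ext n
      push_cast
      ring_nf
    · simp only [Nat.cast_zero, neg_zero]
      ring
  convert HasSum.of_nat_of_neg_add_one (f := fun k => u k - u (k + 1)) hnat hneg using 1
  ring

theorem Monotone.hasSum_int_sub {f : ℝ → ℝ} (hf : Monotone f) {a b : ℝ}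
    (hbot : Tendsto f atBot (𝓝 a)) (htop : Tendsto f atTop (𝓝 b)) (x : ℝ) :
    HasSum (fun k : ℤ => f (x - k + 1) - f (x - k)) (b - a) := by
  have hu : Antitone fun k : ℤ => f (x - k + 1) :=
    hf.comp_antitone fun m n hmn => by gcongr
  have htop' : Tendsto (fun k : ℤ => x - k + 1) atTop atBot := by
    refine tendsto_atBot_add_const_right _ _ ?_
    simpa [sub_eq_add_neg] using tendsto_atBot_add_const_left _ x
      (tendsto_neg_atTop_atBot.comp tendsto_intCast_atTop_atTop)
  have hbot' : Tendsto (fun k : ℤ => x - k + 1) atBot atTop := by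
    refine tendsto_atTop_add_const_right _ _ ?_
    simpa [sub_eq_add_neg] using tendsto_atTop_add_const_left _ x
      (tendsto_neg_atBot_atTop.comp (tendsto_intCast_atBot_iff.2 tendsto_id))
  convert hu.hasSum_int_sub_succ (hbot.comp htop') (htop.comp hbot') using 2 with k
  push_cast
  ring_nf

theorem hasSum_pi_prod_of_nonneg {κ : Type*} {n : ℕ} {f : Fin n → κ → ℝ}
    (hf : ∀ i k, 0 ≤ f i k) {s : Fin n → ℝ} (hs : ∀ i, HasSum (f i) (s i)) :
    HasSum (fun k : Fin n → κ => ∏ i, f i (k i)) (∏ i, s i) := by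
  induction n with
  | zero => simp
  | succ n ih =>
    have htail := ih (fun i => hf i.succ) (fun i => hs i.succ)
    have hsummable := (hs 0).summable.mul_of_nonneg htail.summable (hf 0)
      fun k => Finset.prod_nonneg fun i _ => hf i.succ (k i)
    have hprod := (hs 0).mul htail hsummable
    rw [← (Fin.consEquiv fun _ => κ).hasSum_iff, Fin.prod_univ_succ]
    refine hprod.congr_fun fun p => ?_
    simp [Fin.prod_univ_succ, Fin.consEquiv]

section Kernel

variable {q lam : ℝ}

theorem gq_eq_one_sub (hq : 0 < q) (x : ℝ) :
    gq q lam x = 1 - 2 * q / (Real.exp (lam * x) ^ 2 + q) := by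
  have : 0 < Real.exp (lam * x) ^ 2 + q := by positivity
  rw [gq, Real.exp_neg]
  field_simp
  ring

theorem monotone_gq (hq : 0 < q) (hlam : 0 ≤ lam) : Monotone (gq q lam) := by
  intro a b hab
  rw [gq_eq_one_sub hq, gq_eq_one_sub hq]
  gcongr

theorem tendsto_gq_atTop (hq : 0 < q) (hlam : 0 < lam) : Tendsto (gq q lam) atTop (𝓝 1) := by
  have hexp : Tendsto (fun x => Real.exp (lam * x) ^ 2 + q) atTop atTop :=
    tendsto_atTop_add_const_right _ q <| (tendsto_pow_atTop two_ne_zero).comp <|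
      Real.tendsto_exp_atTop.comp (tendsto_id.const_mul_atTop hlam)
  simpa [funext (gq_eq_one_sub hq (lam := lam))] using
    tendsto_const_nhds.sub (tendsto_const_nhds.div_atTop hexp)

theorem tendsto_gq_atBot (hq : 0 < q) (hlam : 0 < lam) : Tendsto (gq q lam) atBot (𝓝 (-1)) := by
  have hexp : Tendsto (fun x => Real.exp (lam * x) ^ 2 + q) atBot (𝓝 (0 ^ 2 + q)) :=
    ((Real.tendsto_exp_atBot.comp (tendsto_id.const_mul_atBot hlam)).pow 2).add_const q
  convert tendsto_const_nhds.sub (tendsto_const_nhds.div hexp (by positivity)) using 1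
  · exact funext (gq_eq_one_sub hq)
  · norm_num [hq.ne']

theorem hasSum_Mq (hq : 0 < q) (hlam : 0 < lam) (x : ℝ) :
    HasSum (fun k : ℤ => Mq q lam (x - k)) 1 := by
  have h := (monotone_gq hq hlam.le).hasSum_int_sub (tendsto_gq_atBot hq hlam)
    (tendsto_gq_atTop hq hlam)
  have h4 := ((h x).add (h (x - 1))).div_const 4
  rw [show ((1:ℝ) - -1 + (1 - -1)) / 4 = 1 by norm_num] at h4
  refine h4.congr_fun fun k => ?_
  simp only [Mq]
  ring_nf

theorem hasSum_Phi (hq : 0 < q) (hlam : 0 < lam) (x : ℝ) :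
    HasSum (fun k : ℤ => Phi q lam (x - k)) 1 := by
  simpa [Phi] using ((hasSum_Mq hq hlam x).add (hasSum_Mq (inv_pos.2 hq) hlam x)).div_const 2

theorem Phi_nonneg (hq : 0 < q) (hlam : 0 ≤ lam) (x : ℝ) : 0 ≤ Phi q lam x := by
  have h := monotone_gq hq hlam (by linarith : x - 1 ≤ x + 1)
  have h' := monotone_gq (inv_pos.2 hq) hlam (by linarith : x - 1 ≤ x + 1)
  simp only [Phi, Mq]
  linarith

end Kernel

theorem stmt_13_general (lam q : ℝ) (hlam : 0 < lam) (hq : 0 < q) (N : ℕ)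
    (x : Fin N → ℝ) :
    HasSum (fun k : Fin N → ℤ => Zker q lam (fun i => x i - (k i : ℝ))) 1 := by
  simpa [Zker] using hasSum_pi_prod_of_nonneg (fun i (k : ℤ) => Phi_nonneg hq hlam.le (x i - k))
    fun i => hasSum_Phi hq hlam (x i)

theorem stmt_13 (lam q : ℝ) (hlam : 0 < lam) (hq : 0 < q) (N : ℕ) (hN : 1 ≤ N)
    (x : Fin N → ℝ) :
    HasSum (fun k : Fin N → ℤ => Zker q lam (fun i => x i - (k i : ℝ))) 1 :=
  stmt_13_general lam q hlam hq N x
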